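/- arXiv:1902.01644 — 2 statements merged into one kernel-verified Lean document; each statement's English description precedes it below -/
import Mathlib

section
/- Let τ > 0 and let X ∈ ℝ^{m×n} have singular value decomposition X = Σ_{i=1}^{min{m,n}} σ_i u_i v_iᵀ with σ_1 ≥ σ_2 ≥ … ≥ 0. If ‖X‖_* ≥ τ, then the Euclidean projection of X onto the trace-norm ball of radius τ equals Σ_{i=1}^{min{m,n}} max{0, σ_i − σ} u_i v_iᵀ, where σ ≥ 0 is the unique solution of Σ_{i=1}^{min{m,n}} max{0, σ_i − σ} = τ. Moreover, if there exists r ∈ {1, …, min{m,n} − 1} such that Σ_{i=1}^r σ_i ≥ τ + r·σ_{r+1}, then the rank of this projection is at most r. -/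
/- Common definitions: Frobenius norm and inner product, singular values in
non-increasing order, trace (nuclear) norm, multiplicity of the top singular
value, Euclidean projection onto the trace-norm ball, the spectrahedron and its
projection, sorted eigenvalues of symmetric matrices, best rank-`r`
approximations, and the singular-value soft-thresholding (prox) operator. -/

open scoped BigOperators
open Matrix MeasureTheory ProbabilityTheory

attribute [local instance] Matrix.normedAddCommGroup Matrix.normedSpace

noncomputable section

/-- Frobenius norm of a real matrix. -/
def frobNorm {m n : ℕ} (X : Matrix (Fin m) (Fin n) ℝ) : ℝ :=
  Real.sqrt (∑ i, ∑ j, (X i j) ^ 2)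

/-- Frobenius inner product of two real matrices. -/
def frobInner {m n : ℕ} (A B : Matrix (Fin m) (Fin n) ℝ) : ℝ :=
  ∑ i, ∑ j, A i j * B i j

/-- The continuous linear functional `H ↦ ⟨G, H⟩` (Frobenius inner product);
`HasFDerivAt f (frobCLM G) X` says that `G` is the gradient of `f` at `X`. -/
def frobCLM {m n : ℕ} (G : Matrix (Fin m) (Fin n) ℝ) :
    Matrix (Fin m) (Fin n) ℝ →L[ℝ] ℝ :=
  LinearMap.toContinuousLinearMap
    { toFun := fun H => frobInner G H
      map_add' := fun x y => by
        simp [frobInner, Matrix.add_apply, mul_add, Finset.sum_add_distrib]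
      map_smul' := fun c x => by
        simp [frobInner, Matrix.smul_apply, smul_eq_mul, Finset.mul_sum, mul_left_comm] }

/-- The non-increasing (descending) rearrangement of a finite tuple of reals. -/
def sortedDesc {N : ℕ} (f : Fin N → ℝ) : Fin N → ℝ :=
  fun i => f (Tuple.sort f i.rev)

/-- The singular values of a real `m × n` matrix in non-increasing order
(the square roots of the eigenvalues of `Xᵀ * X`), padded with zeros so that
there are `n` of them. -/
def svalsFin {m n : ℕ} (X : Matrix (Fin m) (Fin n) ℝ) : Fin n → ℝ :=
  sortedDesc (fun i => Real.sqrt ((show (Xᵀ * X).IsHermitian by simpa [Matrix.conjTranspose_eq_transpose_of_trivial] using Matrix.isHermitian_conjTranspose_mul_self X).eigenvalues i))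

/-- `svalI X i` is the `(i+1)`-th largest singular value of `X` (i.e. `0`-indexed:
`svalI X 0 = σ₁(X)`), interpreted as `0` when the index is out of range. -/
def svalI {m n : ℕ} (X : Matrix (Fin m) (Fin n) ℝ) (i : ℕ) : ℝ :=
  if h : i < n then svalsFin X ⟨i, h⟩ else 0

/-- The trace norm (nuclear norm): the sum of the singular values. -/
def traceNorm {m n : ℕ} (X : Matrix (Fin m) (Fin n) ℝ) : ℝ :=
  ∑ i, svalsFin X i

/-- `#σ₁(X)`: the multiplicity of the largest singular value of `X`. -/
def multTop {m n : ℕ} (X : Matrix (Fin m) (Fin n) ℝ) : ℕ :=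
  Nat.card {i : Fin n // svalsFin X i = svalI X 0}

/-- `P` is the Euclidean (Frobenius) projection of `X` onto the trace-norm ball
of radius `τ`. -/
def IsTraceBallProj {m n : ℕ} (τ : ℝ) (X P : Matrix (Fin m) (Fin n) ℝ) : Prop :=
  traceNorm P ≤ τ ∧ ∀ Z, traceNorm Z ≤ τ → frobNorm (X - P) ≤ frobNorm (X - Z)

/-- The Euclidean projection onto the trace-norm ball of radius `τ`. -/
def projTraceBall {m n : ℕ} (τ : ℝ) (X : Matrix (Fin m) (Fin n) ℝ) :
    Matrix (Fin m) (Fin n) ℝ :=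
  open scoped Classical in
  if h : ∃ P, IsTraceBallProj τ X P then h.choose else 0

/-- `Y` is a best rank-`r` approximation of `X` in Frobenius norm. -/
def IsBestRankApprox {m n : ℕ} (r : ℕ) (X Y : Matrix (Fin m) (Fin n) ℝ) : Prop :=
  Y.rank ≤ r ∧ ∀ Z : Matrix (Fin m) (Fin n) ℝ, Z.rank ≤ r → frobNorm (X - Y) ≤ frobNorm (X - Z)

/-- The spectrahedron: positive semidefinite matrices of unit trace. -/
def SpectraSet (n : ℕ) : Set (Matrix (Fin n) (Fin n) ℝ) :=
  {X | X.PosSemidef ∧ X.trace = 1}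

/-- `P` is the Euclidean (Frobenius) projection of `X` onto the spectrahedron. -/
def IsSpectraProj {n : ℕ} (X P : Matrix (Fin n) (Fin n) ℝ) : Prop :=
  P ∈ SpectraSet n ∧ ∀ Z ∈ SpectraSet n, frobNorm (X - P) ≤ frobNorm (X - Z)

/-- The Euclidean projection onto the spectrahedron. -/
def projSpectra {n : ℕ} (X : Matrix (Fin n) (Fin n) ℝ) : Matrix (Fin n) (Fin n) ℝ :=
  open scoped Classical in
  if h : ∃ P, IsSpectraProj X P then h.choose else 0

/-- `evalI X i` is the `(i+1)`-th largest eigenvalue of the symmetric matrix `X`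
(`0`-indexed: `evalI X 0 = λ₁(X)`, `evalI X (n-1) = λ_n(X)`); junk value `0` if
`X` is not symmetric or the index is out of range. -/
def evalI {n : ℕ} (X : Matrix (Fin n) (Fin n) ℝ) (i : ℕ) : ℝ :=
  open scoped Classical in
  if h : i < n then
    (if hX : X.IsHermitian then sortedDesc hX.eigenvalues ⟨i, h⟩ else 0)
  else 0

/-- The multiplicity of the smallest eigenvalue of a symmetric matrix. -/
def multMinEig {n : ℕ} (X : Matrix (Fin n) (Fin n) ℝ) : ℕ :=
  Nat.card {i : Fin n // evalI X i = evalI X (n - 1)}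

/-- `Y` is the value at `X` of the singular-value soft-thresholding operator
`𝒯_η`, characterized as the proximal mapping of `η‖·‖_*`:
the (unique) minimizer of `Z ↦ ½‖X − Z‖_F² + η‖Z‖_*`. -/
def IsSVT {m n : ℕ} (η : ℝ) (X Y : Matrix (Fin m) (Fin n) ℝ) : Prop :=
  ∀ Z : Matrix (Fin m) (Fin n) ℝ,
    frobNorm (X - Y) ^ 2 / 2 + η * traceNorm Y ≤ frobNorm (X - Z) ^ 2 / 2 + η * traceNorm Z

/-- The singular-value soft-thresholding operator `𝒯_η`. -/
def softThresh {m n : ℕ} (η : ℝ) (X : Matrix (Fin m) (Fin n) ℝ) :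
    Matrix (Fin m) (Fin n) ℝ :=
  open scoped Classical in
  if h : ∃ Y, IsSVT η X Y then h.choose else 0

instance {m n : ℕ} : MeasurableSpace (Matrix (Fin m) (Fin n) ℝ) :=
  inferInstanceAs (MeasurableSpace (Fin m → Fin n → ℝ))

end


/-
Write `P = ∑ cᵢ uᵢ vᵢᵀ` with `cᵢ = max 0 (σᵢ - s)`. The residual `X - P = ∑ min σᵢ s • uᵢ vᵢᵀ`
has operator norm at most `s`, so by trace-norm/operator-norm duality `⟨X - P, Z⟩ ≤ s ‖Z‖_*`
for every `Z`, while `⟨X - P, P⟩ = s τ`. Hence `⟨X - P, P - Z⟩ ≥ 0` on the ball, and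
`‖X - Z‖² ≥ ‖X - P‖² + ‖P - Z‖²` gives both optimality and uniqueness. The trace norm of
`∑ cᵢ uᵢ vᵢᵀ` is read off the characteristic polynomial of its Gram matrix `∑ cᵢ² vᵢ vᵢᵀ`.
For the rank bound, the partial-sum hypothesis forces `σ_{r+1} ≤ s`, so every `cᵢ` with
`i > r` vanishes.
-/

section Frobenius

variable {m n : ℕ}

lemma frobNorm_eq_sqrt_frobInner (A : Matrix (Fin m) (Fin n) ℝ) :
    frobNorm A = √(frobInner A A) := by
  simp [frobNorm, frobInner, sq]

lemma frobInner_self_nonneg (A : Matrix (Fin m) (Fin n) ℝ) : 0 ≤ frobInner A A :=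
  Finset.sum_nonneg fun _ _ => Finset.sum_nonneg fun _ _ => mul_self_nonneg _

lemma eq_zero_of_frobInner_self_nonpos {A : Matrix (Fin m) (Fin n) ℝ}
    (h : frobInner A A ≤ 0) : A = 0 := by
  have h0 : ∑ i, ∑ j, A i j * A i j = 0 := le_antisymm h (frobInner_self_nonneg A)
  ext i j
  simp only [Fintype.sum_eq_zero_iff_of_nonneg (fun i => Finset.sum_nonneg fun j _ =>
    mul_self_nonneg (A i j)), Fintype.sum_eq_zero_iff_of_nonneg (fun j => mul_self_nonneg _),
    funext_iff, Pi.zero_apply, mul_self_eq_zero] at h0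
  exact h0 i j

lemma frobInner_sub_right (A B C : Matrix (Fin m) (Fin n) ℝ) :
    frobInner A (B - C) = frobInner A B - frobInner A C := by
  simp only [frobInner, Matrix.sub_apply, mul_sub, Finset.sum_sub_distrib]

lemma frobInner_add_add_self (A B : Matrix (Fin m) (Fin n) ℝ) :
    frobInner (A + B) (A + B) = frobInner A A + 2 * frobInner A B + frobInner B B := by
  simp only [frobInner, Matrix.add_apply, ← Finset.sum_add_distrib, Finset.mul_sum]
  exact Finset.sum_congr rfl fun _ _ => Finset.sum_congr rfl fun _ _ => by ring

lemma frobInner_sum_right {ι : Type*} (s : Finset ι) (A : Matrix (Fin m) (Fin n) ℝ)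
    (B : ι → Matrix (Fin m) (Fin n) ℝ) :
    frobInner A (∑ i ∈ s, B i) = ∑ i ∈ s, frobInner A (B i) :=
  map_sum (frobCLM A) B s

lemma frobInner_vecMulVec_right (E : Matrix (Fin m) (Fin n) ℝ) (x : Fin m → ℝ)
    (y : Fin n → ℝ) : frobInner E (vecMulVec x y) = x ⬝ᵥ (E *ᵥ y) := by
  simp only [frobInner, vecMulVec_apply, dotProduct, mulVec, Finset.mul_sum]
  exact Finset.sum_congr rfl fun _ _ => Finset.sum_congr rfl fun _ _ => by ring

lemma frobInner_eq_trace (A B : Matrix (Fin m) (Fin n) ℝ) :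
    frobInner A B = (Aᵀ * B).trace := by
  simp only [frobInner, trace, diag, mul_apply, transpose_apply]
  exact Finset.sum_comm

end Frobenius

section OrthonormalRows

lemma mul_transpose_eq_one_of_orthonormal {ι κ : Type*} [DecidableEq ι] [Fintype κ]
    (u : ι → κ → ℝ) (hu : ∀ i j, ∑ k, u i k * u j k = if i = j then (1 : ℝ) else 0) :
    of u * (of u)ᵀ = 1 := by
  ext i j
  simpa [mul_apply, one_apply] using hu i j

variable {ι κ : Type*} [Fintype ι] [Fintype κ]

lemma transpose_mulVec_dotProduct (V : Matrix ι κ ℝ) (x : ι → ℝ) (y : κ → ℝ) :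
    (Vᵀ *ᵥ x) ⬝ᵥ y = x ⬝ᵥ (V *ᵥ y) := by
  rw [mulVec_transpose, dotProduct_mulVec]

lemma transpose_mulVec_dotProduct_self [DecidableEq ι] {V : Matrix ι κ ℝ} (hV : V * Vᵀ = 1)
    (z : ι → ℝ) : (Vᵀ *ᵥ z) ⬝ᵥ (Vᵀ *ᵥ z) = z ⬝ᵥ z := by
  rw [transpose_mulVec_dotProduct, mulVec_mulVec, hV, one_mulVec]

lemma mulVec_dotProduct_self_le [DecidableEq ι] {V : Matrix ι κ ℝ} (hV : V * Vᵀ = 1)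
    (y : κ → ℝ) : (V *ᵥ y) ⬝ᵥ (V *ᵥ y) ≤ y ⬝ᵥ y := by
  set z := y - Vᵀ *ᵥ (V *ᵥ y)
  have hz : V *ᵥ z = 0 := by
    rw [mulVec_sub, mulVec_mulVec, hV, one_mulVec, sub_self]
  have hcross : z ⬝ᵥ (Vᵀ *ᵥ (V *ᵥ y)) = 0 := by
    rw [dotProduct_comm, transpose_mulVec_dotProduct, hz, dotProduct_zero]
  have hy : y = z + Vᵀ *ᵥ (V *ᵥ y) := by simp [z]
  calc (V *ᵥ y) ⬝ᵥ (V *ᵥ y) ≤ z ⬝ᵥ z + (V *ᵥ y) ⬝ᵥ (V *ᵥ y) :=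
        le_add_of_nonneg_left (Finset.sum_nonneg fun _ _ => mul_self_nonneg _)
    _ = y ⬝ᵥ y := by
        conv_rhs => rw [hy]
        rw [add_dotProduct, dotProduct_add, dotProduct_add, hcross, dotProduct_comm (Vᵀ *ᵥ _) z,
          hcross, transpose_mulVec_dotProduct_self hV]
        ring

end OrthonormalRows

section DiagonalForm

variable {ι : Type*} [Fintype ι] [DecidableEq ι] {m n : ℕ}

lemma sum_smul_vecMulVec_eq (u : ι → Fin m → ℝ) (v : ι → Fin n → ℝ) (c : ι → ℝ) :
    ∑ i, c i • vecMulVec (u i) (v i) = (of u)ᵀ * diagonal c * of v := by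
  ext a b
  simp only [Matrix.sum_apply, Matrix.smul_apply, vecMulVec_apply, mul_apply, diagonal_apply,
    transpose_apply, of_apply, smul_eq_mul, mul_ite, mul_zero, Finset.sum_ite_eq',
    Finset.mem_univ, if_true]
  exact Finset.sum_congr rfl fun _ _ => by ring

variable {U : Matrix ι (Fin m) ℝ} {V : Matrix ι (Fin n) ℝ}

lemma transpose_mul_diagonal_mul_transpose (a : ι → ℝ) :
    (Uᵀ * diagonal a * V)ᵀ = Vᵀ * diagonal a * U := by
  simp [transpose_mul, Matrix.mul_assoc]

lemma transpose_mul_diagonal_mul_gram (hU : U * Uᵀ = 1) (a b : ι → ℝ) :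
    (Uᵀ * diagonal a * V)ᵀ * (Uᵀ * diagonal b * V) = Vᵀ * diagonal (a * b) * V := by
  rw [transpose_mul_diagonal_mul_transpose]
  calc Vᵀ * diagonal a * U * (Uᵀ * diagonal b * V)
      = Vᵀ * diagonal a * (U * Uᵀ) * diagonal b * V := by simp only [Matrix.mul_assoc]
    _ = Vᵀ * diagonal (a * b) * V := by
      rw [hU, Matrix.mul_one, Matrix.mul_assoc (Vᵀ), diagonal_mul_diagonal]
      rfl

lemma frobInner_transpose_mul_diagonal_mul (hU : U * Uᵀ = 1) (hV : V * Vᵀ = 1) (a b : ι → ℝ) :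
    frobInner (Uᵀ * diagonal a * V) (Uᵀ * diagonal b * V) = ∑ i, a i * b i := by
  rw [frobInner_eq_trace, transpose_mul_diagonal_mul_gram hU, trace_mul_cycle, hV,
    Matrix.one_mul, trace_diagonal]
  rfl

lemma mulVec_dotProduct_self_le_of_abs_le (hU : U * Uᵀ = 1) (hV : V * Vᵀ = 1) {e : ι → ℝ}
    {s : ℝ} (he : ∀ i, |e i| ≤ s) (y : Fin n → ℝ) :
    ((Uᵀ * diagonal e * V) *ᵥ y) ⬝ᵥ ((Uᵀ * diagonal e * V) *ᵥ y) ≤ s ^ 2 * (y ⬝ᵥ y) := by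
  rw [← mulVec_mulVec, ← mulVec_mulVec, transpose_mulVec_dotProduct_self hU]
  calc (diagonal e *ᵥ (V *ᵥ y)) ⬝ᵥ (diagonal e *ᵥ (V *ᵥ y))
      = ∑ i, e i ^ 2 * ((V *ᵥ y) i * (V *ᵥ y) i) := by
        simp only [mulVec_diagonal, dotProduct]
        exact Finset.sum_congr rfl fun _ _ => by ring
    _ ≤ ∑ i, s ^ 2 * ((V *ᵥ y) i * (V *ᵥ y) i) := by
        refine Finset.sum_le_sum fun i _ => mul_le_mul_of_nonneg_right ?_ (mul_self_nonneg _)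
        exact sq_le_sq' (abs_le.mp (he i)).1 (abs_le.mp (he i)).2
    _ = s ^ 2 * ((V *ᵥ y) ⬝ᵥ (V *ᵥ y)) := by rw [dotProduct, Finset.mul_sum]
    _ ≤ s ^ 2 * (y ⬝ᵥ y) := by gcongr; exact mulVec_dotProduct_self_le hV y

end DiagonalForm

section TraceNorm

variable {m n : ℕ}

lemma sum_sortedDesc {N : ℕ} (f : Fin N → ℝ) : ∑ i, sortedDesc f i = ∑ i, f i :=
  Equiv.sum_comp (Fin.revPerm.trans (Tuple.sort f)) f

lemma traceNorm_eq_sum_sqrt_eigenvalues (X : Matrix (Fin m) (Fin n) ℝ)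
    (hX : (Xᵀ * X).IsHermitian) : traceNorm X = ∑ i, √(hX.eigenvalues i) :=
  sum_sortedDesc _

open Polynomial in
lemma Matrix.IsHermitian.sum_comp_eigenvalues_eq {A : Matrix (Fin n) (Fin n) ℝ}
    (hA : A.IsHermitian) {κ : Type*} [Fintype κ] (d : κ → ℝ)
    (h : X ^ Fintype.card κ * A.charpoly = X ^ n * ∏ i, (X - C (d i)))
    {g : ℝ → ℝ} (hg : g 0 = 0) : ∑ i, g (hA.eigenvalues i) = ∑ i, g (d i) := by
  have hroots : Fintype.card κ • ({0} : Multiset ℝ) + Finset.univ.val.map hA.eigenvalues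
      = n • {0} + Finset.univ.val.map d := by
    have hprod : ∏ i, (X - C (d i)) ≠ 0 :=
      Finset.prod_ne_zero_iff.mpr fun i _ => X_sub_C_ne_zero (d i)
    have := congrArg roots h
    rw [roots_mul (by rw [h]; exact mul_ne_zero (pow_ne_zero _ X_ne_zero) hprod),
      roots_mul (mul_ne_zero (pow_ne_zero _ X_ne_zero) hprod), roots_X_pow, roots_X_pow,
      hA.roots_charpoly_eq_eigenvalues, roots_prod _ _ hprod] at this
    simpa using this
  have := congrArg (fun s => (s.map g).sum) hroots
  simp only [Multiset.map_add, Multiset.sum_add, Multiset.map_nsmul, Multiset.sum_nsmul,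
    Multiset.map_singleton, Multiset.sum_singleton, hg, smul_zero, zero_add,
    Multiset.map_map] at this
  exact this

end TraceNorm

section TraceNormDiagonalForm

variable {ι : Type*} [Fintype ι] [DecidableEq ι] {m n : ℕ}

open Polynomial in
lemma traceNorm_transpose_mul_diagonal_mul {U : Matrix ι (Fin m) ℝ} {V : Matrix ι (Fin n) ℝ}
    (hU : U * Uᵀ = 1) (hV : V * Vᵀ = 1) {c : ι → ℝ} (hc : ∀ i, 0 ≤ c i) :
    traceNorm (Uᵀ * diagonal c * V) = ∑ i, c i := by
  set P := Uᵀ * diagonal c * V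
  have hH : (Pᵀ * P).IsHermitian := by
    simpa [conjTranspose_eq_transpose_of_trivial] using isHermitian_conjTranspose_mul_self P
  have hcharpoly : X ^ Fintype.card ι * (Pᵀ * P).charpoly
      = X ^ n * ∏ i, (X - C ((c * c) i)) := by
    rw [transpose_mul_diagonal_mul_gram hU, charpoly_mul_comm', Fintype.card_fin,
      ← Matrix.mul_assoc, hV, Matrix.one_mul, charpoly_diagonal]
  rw [traceNorm_eq_sum_sqrt_eigenvalues P hH,
    hH.sum_comp_eigenvalues_eq (c * c) hcharpoly Real.sqrt_zero]
  exact Finset.sum_congr rfl fun i _ => Real.sqrt_mul_self (hc i)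

end TraceNormDiagonalForm

lemma rank_transpose_mul_diagonal_mul_le {k m n r : ℕ} (U : Matrix (Fin k) (Fin m) ℝ)
    (V : Matrix (Fin k) (Fin n) ℝ) {c : Fin k → ℝ} (hc : ∀ i : Fin k, r ≤ i → c i = 0) :
    (Uᵀ * diagonal c * V).rank ≤ r := by
  calc (Uᵀ * diagonal c * V).rank ≤ (diagonal c).rank :=
        (rank_mul_le_left _ _).trans (rank_mul_le_right _ _)
    _ = Fintype.card {i // c i ≠ 0} := rank_diagonal c
    _ ≤ Fintype.card (Fin r) := Fintype.card_le_of_injective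
          (fun i => ⟨i.1, lt_of_not_ge fun h => i.2 (hc i.1 h)⟩)
          (fun i j hij => Subtype.ext (Fin.ext (Fin.mk.inj_iff.mp hij)))
    _ = r := Fintype.card_fin r

section Duality

variable {m n : ℕ}

lemma dotProduct_le_sqrt_mul_sqrt {κ : Type*} [Fintype κ] (x y : κ → ℝ) :
    x ⬝ᵥ y ≤ √(x ⬝ᵥ x) * √(y ⬝ᵥ y) := by
  simpa [dotProduct, sq] using Real.sum_mul_le_sqrt_mul_sqrt Finset.univ x y

lemma eq_sum_vecMulVec_mulVec_row (Z : Matrix (Fin m) (Fin n) ℝ) {Q : Matrix (Fin n) (Fin n) ℝ}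
    (hQ : Qᵀ * Q = 1) : Z = ∑ j, vecMulVec (Z *ᵥ Q j) (Q j) := by
  ext a b
  calc Z a b = (Z * Qᵀ * Q) a b := by rw [Matrix.mul_assoc, hQ, Matrix.mul_one]
    _ = _ := by
      simp only [mul_apply, transpose_apply, Matrix.sum_apply, vecMulVec_apply, mulVec,
        dotProduct]

lemma frobInner_le_mul_traceNorm {E : Matrix (Fin m) (Fin n) ℝ} {s : ℝ} (hs : 0 ≤ s)
    (hE : ∀ y, (E *ᵥ y) ⬝ᵥ (E *ᵥ y) ≤ s ^ 2 * (y ⬝ᵥ y)) (Z : Matrix (Fin m) (Fin n) ℝ) :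
    frobInner E Z ≤ s * traceNorm Z := by
  have hH : (Zᵀ * Z).IsHermitian := by
    simpa [conjTranspose_eq_transpose_of_trivial] using isHermitian_conjTranspose_mul_self Z
  set W : Matrix (Fin n) (Fin n) ℝ := (hH.eigenvectorUnitary : Matrix (Fin n) (Fin n) ℝ)
  set w : Fin n → Fin n → ℝ := fun j => ⇑(hH.eigenvectorBasis j)
  have hw : Wᵀ = of w := rfl
  have hW : ∀ i j, W i j = w j i := fun _ _ => rfl
  have hWW : W * Wᵀ = 1 := by
    simpa [star_eq_conjTranspose, conjTranspose_eq_transpose_of_trivial] using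
      mem_unitaryGroup_iff.mp hH.eigenvectorUnitary.2
  have hunit : ∀ j, w j ⬝ᵥ w j = 1 := fun j => by
    have hWW' : Wᵀ * W = 1 := mul_eq_one_comm.mp hWW
    simpa [hw, hW, mul_apply, one_apply, dotProduct] using congrFun (congrFun hWW' j) j
  have hnorm : ∀ j, (Z *ᵥ w j) ⬝ᵥ (Z *ᵥ w j) = hH.eigenvalues j := fun j => by
    rw [← transpose_mulVec_dotProduct, mulVec_mulVec, dotProduct_comm,
      hH.mulVec_eigenvectorBasis j, dotProduct_smul, hunit j, smul_eq_mul, mul_one]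
  have hterm : ∀ j, frobInner E (vecMulVec (Z *ᵥ w j) (w j)) ≤ s * √(hH.eigenvalues j) :=
    fun j => calc
      _ = (Z *ᵥ w j) ⬝ᵥ (E *ᵥ w j) := frobInner_vecMulVec_right _ _ _
      _ ≤ √(hH.eigenvalues j) * √((E *ᵥ w j) ⬝ᵥ (E *ᵥ w j)) := by
          rw [← hnorm j]; exact dotProduct_le_sqrt_mul_sqrt _ _
      _ ≤ √(hH.eigenvalues j) * s := by
          gcongr
          calc √((E *ᵥ w j) ⬝ᵥ (E *ᵥ w j)) ≤ √(s ^ 2) := by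
                gcongr; simpa [hunit j] using hE (w j)
            _ = s := Real.sqrt_sq hs
      _ = s * √(hH.eigenvalues j) := mul_comm _ _
  calc frobInner E Z = ∑ j, frobInner E (vecMulVec (Z *ᵥ w j) (w j)) := by
        conv_lhs => rw [eq_sum_vecMulVec_mulVec_row Z (hw ▸ hWW : (of w)ᵀ * of w = 1)]
        exact frobInner_sum_right _ _ _
    _ ≤ ∑ j, s * √(hH.eigenvalues j) := Finset.sum_le_sum fun j _ => hterm j
    _ = s * traceNorm Z := by rw [traceNorm_eq_sum_sqrt_eigenvalues Z hH, Finset.mul_sum]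

end Duality

section Projection

variable {m n : ℕ}

lemma isTraceBallProj_of_frobInner {τ s : ℝ} {X P : Matrix (Fin m) (Fin n) ℝ} (hs : 0 ≤ s)
    (hP : traceNorm P ≤ τ) (hdual : ∀ Z, frobInner (X - P) Z ≤ s * traceNorm Z)
    (hXP : frobInner (X - P) P = s * τ) :
    IsTraceBallProj τ X P ∧ ∀ Q, IsTraceBallProj τ X Q → Q = P := by
  have hpyth : ∀ Z, traceNorm Z ≤ τ →
      frobInner (X - P) (X - P) + frobInner (P - Z) (P - Z) ≤ frobInner (X - Z) (X - Z) := by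
    intro Z hZ
    have hvar : 0 ≤ frobInner (X - P) (P - Z) := by
      rw [frobInner_sub_right, hXP]
      nlinarith [hdual Z, mul_le_mul_of_nonneg_left hZ hs]
    have hexpand := frobInner_add_add_self (X - P) (P - Z)
    rw [sub_add_sub_cancel] at hexpand
    linarith
  have hproj : IsTraceBallProj τ X P := by
    refine ⟨hP, fun Z hZ => ?_⟩
    rw [frobNorm_eq_sqrt_frobInner, frobNorm_eq_sqrt_frobInner]
    exact Real.sqrt_le_sqrt (by linarith [hpyth Z hZ, frobInner_self_nonneg (P - Z)])
  refine ⟨hproj, fun Q hQ => ?_⟩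
  have hle := hQ.2 P hP
  rw [frobNorm_eq_sqrt_frobInner, frobNorm_eq_sqrt_frobInner,
    Real.sqrt_le_sqrt_iff (frobInner_self_nonneg _)] at hle
  have hPQ : P - Q = 0 := eq_zero_of_frobInner_self_nonpos (by linarith [hpyth Q hQ.1])
  exact (sub_eq_zero.mp hPQ).symm

end Projection

section Threshold

variable {ι : Type*} [Fintype ι]

lemma sum_max_sub_lt_of_lt (f : ι → ℝ) {a b : ℝ} (hab : a < b)
    (hpos : 0 < ∑ i, max 0 (f i - a)) : ∑ i, max 0 (f i - b) < ∑ i, max 0 (f i - a) := by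
  obtain ⟨i₀, -, hi₀⟩ :=
    Finset.exists_lt_of_sum_lt (s := Finset.univ) (f := fun _ => (0 : ℝ)) (by simpa using hpos)
  refine Finset.sum_lt_sum (fun i _ => max_le_max le_rfl (by linarith)) ⟨i₀, Finset.mem_univ _, ?_⟩
  have : 0 < f i₀ - a := by simpa using hi₀
  rw [max_eq_right this.le]
  exact max_lt this (by linarith)

lemma eq_of_sum_max_sub_eq (f : ι → ℝ) {a b τ : ℝ} (hτ : 0 < τ)
    (ha : ∑ i, max 0 (f i - a) = τ) (hb : ∑ i, max 0 (f i - b) = τ) : a = b := by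
  by_contra hne
  rcases lt_or_gt_of_ne hne with h | h
  · linarith [sum_max_sub_lt_of_lt f h (ha ▸ hτ)]
  · linarith [sum_max_sub_lt_of_lt f h (hb ▸ hτ)]

lemma le_of_add_mul_le_sum_ite_lt {k r : ℕ} {σ : Fin k → ℝ} {s τ : ℝ} (hr1 : 1 ≤ r)
    (hr : r < k) (hsum : ∑ i, max 0 (σ i - s) = τ)
    (h : τ + r * σ ⟨r, hr⟩ ≤ ∑ i : Fin k, if (i : ℕ) < r then σ i else 0) :
    σ ⟨r, hr⟩ ≤ s := by
  have hcount : ∑ i : Fin k, (if (i : ℕ) < r then s else 0) = r * s := by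
    rw [Finset.sum_ite, Finset.sum_const_zero, add_zero, Finset.sum_const,
      Fin.card_filter_val_lt, min_eq_right hr.le, nsmul_eq_mul]
  have hτ : (∑ i : Fin k, if (i : ℕ) < r then σ i else 0) - r * s ≤ τ := by
    rw [← hcount, ← Finset.sum_sub_distrib, ← hsum]
    refine Finset.sum_le_sum fun i _ => ?_
    split_ifs
    · exact le_max_right _ _
    · simp
  have hr0 : (0 : ℝ) < r := by exact_mod_cast hr1
  nlinarith

lemma sub_max_zero_sub_eq_min (a s : ℝ) : a - max 0 (a - s) = min a s := by
  rcases le_total a s with h | h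
  · simp [h]
  · rw [max_eq_right (sub_nonneg.mpr h), min_eq_right h]; ring

lemma min_mul_max_zero_sub (a s : ℝ) : min a s * max 0 (a - s) = s * max 0 (a - s) := by
  rcases le_total a s with h | h
  · simp [h]
  · rw [min_eq_right h]

end Threshold

theorem stmt0_general {m n : ℕ} (τ : ℝ) (hτpos : 0 < τ)
    (X : Matrix (Fin m) (Fin n) ℝ)
    (u : Fin (min m n) → (Fin m → ℝ)) (v : Fin (min m n) → (Fin n → ℝ))
    (σ : Fin (min m n) → ℝ)
    (hu : ∀ i j, ∑ k, u i k * u j k = if i = j then (1 : ℝ) else 0)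
    (hv : ∀ i j, ∑ k, v i k * v j k = if i = j then (1 : ℝ) else 0)
    (hσdesc : Antitone σ) (hσnonneg : ∀ i, 0 ≤ σ i)
    (hX : X = ∑ i, σ i • Matrix.vecMulVec (u i) (v i))
    (s : ℝ) (hs : 0 ≤ s)
    (hsum : ∑ i, max 0 (σ i - s) = τ) :
    (∀ s', 0 ≤ s' → ∑ i, max 0 (σ i - s') = τ → s' = s) ∧
    IsTraceBallProj τ X (∑ i, max 0 (σ i - s) • Matrix.vecMulVec (u i) (v i)) ∧
    (∀ Q, IsTraceBallProj τ X Q →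
      Q = ∑ i, max 0 (σ i - s) • Matrix.vecMulVec (u i) (v i)) ∧
    (∀ r : ℕ, 1 ≤ r → ∀ hr : r < min m n,
      τ + (r : ℝ) * σ ⟨r, hr⟩ ≤ ∑ i : Fin (min m n), (if (i : ℕ) < r then σ i else 0) →
      (∑ i, max 0 (σ i - s) • Matrix.vecMulVec (u i) (v i)).rank ≤ r) := by
  have hU := mul_transpose_eq_one_of_orthonormal u hu
  have hV := mul_transpose_eq_one_of_orthonormal v hv
  rw [sum_smul_vecMulVec_eq] at hX ⊢
  set P := (of u)ᵀ * diagonal (fun i => max 0 (σ i - s)) * of v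
  have hres : X - P = (of u)ᵀ * diagonal (fun i => min (σ i) s) * of v := by
    rw [hX, ← Matrix.sub_mul, ← Matrix.mul_sub, diagonal_sub]
    simp only [sub_max_zero_sub_eq_min]
  have hPnorm : traceNorm P = τ :=
    (traceNorm_transpose_mul_diagonal_mul hU hV fun _ => le_max_left _ _).trans hsum
  have hdual : ∀ Z, frobInner (X - P) Z ≤ s * traceNorm Z := by
    rw [hres]
    refine frobInner_le_mul_traceNorm hs (mulVec_dotProduct_self_le_of_abs_le hU hV fun i => ?_)
    rw [abs_of_nonneg (le_min (hσnonneg i) hs)]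
    exact min_le_right _ _
  have hinner : frobInner (X - P) P = s * τ := by
    rw [hres, frobInner_transpose_mul_diagonal_mul hU hV, ← hsum, Finset.mul_sum]
    simp only [min_mul_max_zero_sub]
  obtain ⟨hproj, hunique⟩ := isTraceBallProj_of_frobInner hs hPnorm.le hdual hinner
  refine ⟨fun s' _ hsum' => eq_of_sum_max_sub_eq σ hτpos hsum' hsum, hproj, hunique,
    fun r hr1 hr hpartial => rank_transpose_mul_diagonal_mul_le _ _ fun i hi => ?_⟩
  have hσs : σ i ≤ s :=
    (hσdesc (show (⟨r, hr⟩ : Fin (min m n)) ≤ i from hi)).trans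
      (le_of_add_mul_le_sum_ite_lt hr1 hr hsum hpartial)
  exact max_eq_left (sub_nonpos.mpr hσs)

/-- projection onto the trace-norm ball.
If `X = ∑ σᵢ uᵢ vᵢᵀ` is an SVD of `X` (orthonormal `u`, `v`; `σ` non-increasing and
nonnegative) and `τ ≤ ‖X‖_*`, then for the unique `s ≥ 0` with
`∑ max 0 (σᵢ − s) = τ`, the matrix `∑ max 0 (σᵢ − s) uᵢ vᵢᵀ` is the (unique)
Euclidean projection of `X` onto the trace-norm ball of radius `τ`; moreover, if
`∑_{i≤r} σᵢ ≥ τ + r σ_{r+1}` for some `1 ≤ r ≤ min m n − 1`, this projection has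
rank at most `r`. -/
theorem stmt0 {m n : ℕ} (τ : ℝ) (hτpos : 0 < τ)
    (X : Matrix (Fin m) (Fin n) ℝ)
    (u : Fin (min m n) → (Fin m → ℝ)) (v : Fin (min m n) → (Fin n → ℝ))
    (σ : Fin (min m n) → ℝ)
    (hu : ∀ i j, ∑ k, u i k * u j k = if i = j then (1 : ℝ) else 0)
    (hv : ∀ i j, ∑ k, v i k * v j k = if i = j then (1 : ℝ) else 0)
    (hσdesc : Antitone σ) (hσnonneg : ∀ i, 0 ≤ σ i)
    (hX : X = ∑ i, σ i • Matrix.vecMulVec (u i) (v i))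
    (hτle : τ ≤ traceNorm X)
    (s : ℝ) (hs : 0 ≤ s)
    (hsum : ∑ i, max 0 (σ i - s) = τ) :
    (∀ s', 0 ≤ s' → ∑ i, max 0 (σ i - s') = τ → s' = s) ∧
    IsTraceBallProj τ X (∑ i, max 0 (σ i - s) • Matrix.vecMulVec (u i) (v i)) ∧
    (∀ Q, IsTraceBallProj τ X Q →
      Q = ∑ i, max 0 (σ i - s) • Matrix.vecMulVec (u i) (v i)) ∧
    (∀ r : ℕ, 1 ≤ r → ∀ hr : r < min m n,
      τ + (r : ℝ) * σ ⟨r, hr⟩ ≤ ∑ i : Fin (min m n), (if (i : ℕ) < r then σ i else 0) →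
      (∑ i, max 0 (σ i - s) • Matrix.vecMulVec (u i) (v i)).rank ≤ r) :=
  stmt0_general τ hτpos X u v σ hu hv hσdesc hσnonneg hX s hs hsum
end

section
/- Let f : 𝕊^n → ℝ be convex and differentiable, and let X* be a minimizer of f over the spectrahedron 𝒮_n with eigendecomposition X* = Σ_{i=1}^r λ_i v_i v_iᵀ (λ_i > 0). Then each v_i, i = 1, …, r, is an eigenvector of −∇f(X*) corresponding to its largest eigenvalue λ_1(−∇f(X*)) = −λ_n(∇f(X*)). -/
/- Common definitions: Frobenius norm and inner product, singular values in
non-increasing order, trace (nuclear) norm, multiplicity of the top singular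
value, Euclidean projection onto the trace-norm ball, the spectrahedron and its
projection, sorted eigenvalues of symmetric matrices, best rank-`r`
approximations, and the singular-value soft-thresholding (prox) operator. -/

open scoped BigOperators
open Matrix MeasureTheory ProbabilityTheory

attribute [local instance] Matrix.normedAddCommGroup Matrix.normedSpace

/-! First-order optimality over the convex set `𝒮_n` gives `⟨G, X*⟩ ≤ ⟨G, w wᵀ⟩ = λ_n(G)` for
`G = ∇f(X*)` and a unit eigenvector `w` of its smallest eigenvalue. As `Tr X* = 1`, this says
`⟨G - λ_n(G) I, X*⟩ = ∑ λ_i v_iᵀ (G - λ_n(G) I) v_i ≤ 0`, a sum of nonnegative terms because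
`G - λ_n(G) I ⪰ 0`. With `λ_i > 0` every term vanishes, so each `v_i` lies in the kernel of the
positive semidefinite matrix `G - λ_n(G) I`. Finally `λ₁(-G) = -λ_n(G)` because the spectrum of
`-G` is the negated spectrum of `G`. -/

open MatrixOrder

theorem Convex.hasFDerivAt_apply_le_of_isMinOn {E : Type*} [NormedAddCommGroup E]
    [NormedSpace ℝ E] {f : E → ℝ} {f' : E →L[ℝ] ℝ} {s : Set E} {x y : E} (hs : Convex ℝ s)
    (hmin : IsMinOn f s x) (hf : HasFDerivAt f f' x) (hx : x ∈ s) (hy : y ∈ s) : f' x ≤ f' y := by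
  have h := hmin.localize.hasFDerivWithinAt_nonneg hf.hasFDerivWithinAt
    (sub_mem_posTangentConeAt_of_segment_subset (hs.segment_subset hx hy))
  rwa [map_sub, sub_nonneg] at h

theorem convex_spectraSet (n : ℕ) : Convex ℝ (SpectraSet n) := by
  rintro X ⟨hX, htrX⟩ Y ⟨hY, htrY⟩ a b ha hb hab
  refine ⟨(hX.smul ha).add (hY.smul hb), ?_⟩
  rw [trace_add, trace_smul, trace_smul, htrX, htrY, smul_eq_mul, smul_eq_mul, mul_one, mul_one,
    hab]

theorem vecMulVec_mem_spectraSet {n : ℕ} {u : Fin n → ℝ} (hu : u ⬝ᵥ u = 1) :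
    vecMulVec u u ∈ SpectraSet n :=
  ⟨by simpa using posSemidef_vecMulVec_self_star u, by rw [trace_vecMulVec, hu]⟩

theorem frobInner_vecMulVec {m n : ℕ} (G : Matrix (Fin m) (Fin n) ℝ) (u : Fin m → ℝ)
    (w : Fin n → ℝ) : frobInner G (vecMulVec u w) = u ⬝ᵥ G *ᵥ w := by
  simp only [frobInner, vecMulVec_apply, dotProduct, mulVec, Finset.mul_sum]
  exact Finset.sum_congr rfl fun i _ => Finset.sum_congr rfl fun j _ => by ring

theorem frobInner_sub_smul_one {n : ℕ} (G X : Matrix (Fin n) (Fin n) ℝ) (c : ℝ) :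
    frobInner (G - c • 1) X = frobInner G X - c * X.trace := by
  simp [frobInner, trace, sub_mul, Finset.sum_sub_distrib, one_apply, Finset.mul_sum]

theorem frobInner_sum_smul_vecMulVec {ι : Type*} [Fintype ι] {n : ℕ}
    (P : Matrix (Fin n) (Fin n) ℝ) (lam : ι → ℝ) (v : ι → Fin n → ℝ) :
    frobInner P (∑ i, lam i • vecMulVec (v i) (v i)) = ∑ i, lam i * (v i ⬝ᵥ P *ᵥ v i) := by
  change frobCLM P _ = _
  simp only [map_sum, map_smul, smul_eq_mul]
  exact Finset.sum_congr rfl fun i _ => by rw [← frobInner_vecMulVec]; rfl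

theorem Matrix.PosSemidef.mulVec_eq_zero_of_frobInner_nonpos {ι : Type*} [Fintype ι] {n : ℕ}
    {P : Matrix (Fin n) (Fin n) ℝ} (hP : P.PosSemidef) {lam : ι → ℝ} (hlam : ∀ i, 0 < lam i)
    {v : ι → Fin n → ℝ} (h : frobInner P (∑ i, lam i • vecMulVec (v i) (v i)) ≤ 0) (i : ι) :
    P *ᵥ v i = 0 := by
  have hterm : ∀ j, 0 ≤ lam j * (v j ⬝ᵥ P *ᵥ v j) := fun j =>
    mul_nonneg (hlam j).le (by simpa using hP.dotProduct_mulVec_nonneg (v j))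
  rw [frobInner_sum_smul_vecMulVec] at h
  have hi : lam i * (v i ⬝ᵥ P *ᵥ v i) = 0 :=
    (Finset.sum_eq_zero_iff_of_nonneg fun j _ => hterm j).mp
      (le_antisymm h (Finset.sum_nonneg fun j _ => hterm j)) i (Finset.mem_univ i)
  rw [← hP.dotProduct_mulVec_zero_iff, star_trivial]
  exact (mul_eq_zero.mp hi).resolve_left (hlam i).ne'

theorem sortedDesc_antitone {N : ℕ} (f : Fin N → ℝ) : Antitone (sortedDesc f) :=
  fun _ _ hij => Tuple.monotone_sort f (Fin.rev_le_rev.mpr hij)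

theorem exists_sortedDesc_eq {N : ℕ} (f : Fin N → ℝ) (i : Fin N) : ∃ j, sortedDesc f j = f i :=
  ⟨((Tuple.sort f).symm i).rev, by simp [sortedDesc]⟩

namespace Matrix.IsHermitian

section

variable {ι : Type*} [Fintype ι] [DecidableEq ι] {A : Matrix ι ι ℝ}

theorem posSemidef_sub_smul_one {c : ℝ} (hA : A.IsHermitian)
    (hc : c ∈ lowerBounds (spectrum ℝ A)) : (A - c • 1).PosSemidef := by
  simpa [le_iff, Algebra.algebraMap_eq_smul_one] using
    algebraMap_le_of_le_spectrum (a := A) (fun x hx => hc hx) hA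

theorem exists_unit_mulVec_eq_smul_of_mem_spectrum (hA : A.IsHermitian) {c : ℝ}
    (hc : c ∈ spectrum ℝ A) : ∃ w : ι → ℝ, w ⬝ᵥ w = 1 ∧ A *ᵥ w = c • w := by
  rw [hA.spectrum_real_eq_range_eigenvalues] at hc
  obtain ⟨i, rfl⟩ := hc
  refine ⟨hA.eigenvectorBasis i, ?_, hA.mulVec_eigenvectorBasis i⟩
  have hsq : (inner ℝ (hA.eigenvectorBasis i) (hA.eigenvectorBasis i) : ℝ) = 1 := by
    rw [real_inner_self_eq_norm_sq, hA.eigenvectorBasis.orthonormal.1 i, one_pow]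
  rwa [EuclideanSpace.inner_eq_star_dotProduct, star_trivial] at hsq

end

section

variable {n : ℕ} {A : Matrix (Fin n) (Fin n) ℝ}

theorem evalI_eq_sortedDesc (hA : A.IsHermitian) {k : ℕ} (hk : k < n) :
    evalI A k = sortedDesc hA.eigenvalues ⟨k, hk⟩ := by
  simp only [evalI, dif_pos hk, dif_pos hA]

theorem isGreatest_spectrum_evalI_zero (hA : A.IsHermitian) (hn : 0 < n) :
    IsGreatest (spectrum ℝ A) (evalI A 0) := by
  rw [hA.spectrum_real_eq_range_eigenvalues, hA.evalI_eq_sortedDesc hn]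
  refine ⟨⟨_, rfl⟩, ?_⟩
  rintro _ ⟨i, rfl⟩
  obtain ⟨j, hj⟩ := exists_sortedDesc_eq hA.eigenvalues i
  exact hj ▸ sortedDesc_antitone _ (Fin.le_def.mpr (Nat.zero_le j))

theorem isLeast_spectrum_evalI_last (hA : A.IsHermitian) (hn : 0 < n) :
    IsLeast (spectrum ℝ A) (evalI A (n - 1)) := by
  rw [hA.spectrum_real_eq_range_eigenvalues, hA.evalI_eq_sortedDesc (Nat.sub_one_lt_of_lt hn)]
  refine ⟨⟨_, rfl⟩, ?_⟩
  rintro _ ⟨i, rfl⟩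
  obtain ⟨j, hj⟩ := exists_sortedDesc_eq hA.eigenvalues i
  exact hj ▸ sortedDesc_antitone _ (Fin.le_def.mpr (Nat.le_sub_one_of_lt j.isLt))

theorem evalI_neg_zero (hA : A.IsHermitian) (hn : 0 < n) :
    evalI (-A) 0 = -evalI A (n - 1) := by
  obtain ⟨hmax_mem, hmax_ge⟩ := hA.neg.isGreatest_spectrum_evalI_zero hn
  obtain ⟨hmin_mem, hmin_le⟩ := hA.isLeast_spectrum_evalI_last hn
  rw [← spectrum.neg_eq] at hmax_mem hmax_ge
  exact le_antisymm (le_neg_of_le_neg (hmin_le hmax_mem)) (hmax_ge (Set.neg_mem_neg.mpr hmin_mem))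

end

end Matrix.IsHermitian

theorem stmt15_general {n : ℕ} (f : Matrix (Fin n) (Fin n) ℝ → ℝ)
    (gradf : Matrix (Fin n) (Fin n) ℝ → Matrix (Fin n) (Fin n) ℝ)
    (hdiff : ∀ X, HasFDerivAt f (frobCLM (gradf X)) X)
    (Xstar : Matrix (Fin n) (Fin n) ℝ)
    (hfeas : Xstar ∈ SpectraSet n)
    (hopt : ∀ Z ∈ SpectraSet n, f Xstar ≤ f Z)
    (hsym : (gradf Xstar).IsHermitian)
    (r : ℕ) (v : Fin r → (Fin n → ℝ)) (lam : Fin r → ℝ)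
    (hlampos : ∀ i, 0 < lam i)
    (hX : Xstar = ∑ i, lam i • Matrix.vecMulVec (v i) (v i)) :
    (∀ i, (-(gradf Xstar)).mulVec (v i) = evalI (-(gradf Xstar)) 0 • v i) ∧
    evalI (-(gradf Xstar)) 0 = - evalI (gradf Xstar) (n - 1) := by
  set G := gradf Xstar
  set m := evalI G (n - 1)
  have hn : 0 < n := Nat.pos_of_ne_zero fun h => by
    subst h; simpa [trace] using hfeas.2
  obtain ⟨hm_mem, hm_le⟩ := hsym.isLeast_spectrum_evalI_last hn
  obtain ⟨w, hw, hGw⟩ := hsym.exists_unit_mulVec_eq_smul_of_mem_spectrum hm_mem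
  have hGX_le : frobInner G Xstar ≤ m := by
    have h := (convex_spectraSet n).hasFDerivAt_apply_le_of_isMinOn hopt (hdiff Xstar) hfeas
      (vecMulVec_mem_spectraSet hw)
    change frobInner G Xstar ≤ frobInner G (vecMulVec w w) at h
    rwa [frobInner_vecMulVec, hGw, dotProduct_smul, hw, smul_eq_mul, mul_one] at h
  have hGv : ∀ i, G *ᵥ v i = m • v i := by
    have hP : frobInner (G - m • 1) Xstar ≤ 0 := by
      rw [frobInner_sub_smul_one, hfeas.2]
      linarith
    intro i
    have h := (hsym.posSemidef_sub_smul_one hm_le).mulVec_eq_zero_of_frobInner_nonpos hlampos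
      (hX ▸ hP) i
    rwa [sub_mulVec, smul_mulVec, one_mulVec, sub_eq_zero] at h
  refine ⟨fun i => ?_, hsym.evalI_neg_zero hn⟩
  rw [neg_mulVec, hGv, hsym.evalI_neg_zero hn, neg_smul]

/-- If `X* = ∑_{i=1}^r λᵢ vᵢ vᵢᵀ` (λᵢ > 0) is an
eigendecomposition of a minimizer `X*` of convex differentiable `f` over the
spectrahedron, then each `vᵢ` is an eigenvector of `−∇f(X*)` for its largest
eigenvalue `λ₁(−∇f(X*)) = −λ_n(∇f(X*))`. -/
theorem stmt15 {n : ℕ} (f : Matrix (Fin n) (Fin n) ℝ → ℝ)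
    (gradf : Matrix (Fin n) (Fin n) ℝ → Matrix (Fin n) (Fin n) ℝ)
    (hconv : ConvexOn ℝ Set.univ f)
    (hdiff : ∀ X, HasFDerivAt f (frobCLM (gradf X)) X)
    (Xstar : Matrix (Fin n) (Fin n) ℝ)
    (hfeas : Xstar ∈ SpectraSet n)
    (hopt : ∀ Z ∈ SpectraSet n, f Xstar ≤ f Z)
    (hsym : (gradf Xstar).IsHermitian)
    (r : ℕ) (v : Fin r → (Fin n → ℝ)) (lam : Fin r → ℝ)
    (hv : ∀ i j, ∑ k, v i k * v j k = if i = j then (1 : ℝ) else 0)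
    (hlampos : ∀ i, 0 < lam i)
    (hX : Xstar = ∑ i, lam i • Matrix.vecMulVec (v i) (v i)) :
    (∀ i, (-(gradf Xstar)).mulVec (v i) = evalI (-(gradf Xstar)) 0 • v i) ∧
    evalI (-(gradf Xstar)) 0 = - evalI (gradf Xstar) (n - 1) :=
  stmt15_general f gradf hdiff Xstar hfeas hopt hsym r v lam hlampos hX
end
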